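/- Let X = {0} ∪ {1/2ⁱ : i ≥ 1} ⊆ ℝ with the usual metric d(x,y) = |x − y|, regarded as a complete C*-algebra valued metric space over the C*-algebra ℝ. Define T : X → X by T(0) = 1/2 and T(1/2ⁱ) = 1/2^{i+1} for i ≥ 1. Then for all x, y ∈ X and all n ≥ 1, |Tⁿx − Tⁿy| ≤ (1/2)ⁿ · (1 + x + y) (so T is a C*-algebra valued Ćirić-type1 contractive mapping with q(x,y) = 1/√2 and δ(x,y) = 1 + x + y), yet T has no fixed point in X. -/
import Mathlib


/-- The set X = {0} ∪ {1/2^i : i ≥ 1} ⊆ ℝ. -/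
def X16 : Set ℝ := {x | x = 0 ∨ ∃ i : ℕ, 1 ≤ i ∧ x = (1 / 2) ^ i}

lemma half_mem_X16 : (1 / 2 : ℝ) ∈ X16 := Or.inr ⟨1, le_refl 1, by norm_num⟩

lemma half_of_mem_X16 {x : ℝ} (hx : x ∈ X16) : x / 2 ∈ X16 := by
  rcases hx with h | ⟨i, hi, rfl⟩
  · left; rw [h]; norm_num
  · right; exact ⟨i + 1, by omega, by rw [pow_succ]; ring⟩

/-- The map T(0) = 1/2 and T(1/2^i) = 1/2^(i+1). -/
noncomputable def T16 : X16 → X16 :=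
  fun x => if (x : ℝ) = 0 then ⟨1 / 2, half_mem_X16⟩ else ⟨(x : ℝ) / 2, half_of_mem_X16 x.2⟩

lemma X16_nonneg {x : ℝ} (hx : x ∈ X16) : 0 ≤ x := by
  rcases hx with h | ⟨i, _, rfl⟩
  · simp [h]
  · positivity

lemma T16_ne_zero (x : X16) : (T16 x : ℝ) ≠ 0 := by
  unfold T16
  split_ifs with h
  · norm_num
  · simpa using h

lemma T16_le (x : X16) : (T16 x : ℝ) ≤ (1 / 2) * (1 + (x : ℝ)) := by
  have hx := X16_nonneg x.2
  unfold T16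
  split_ifs with h
  · simp; linarith
  · simp; linarith

lemma orbit_bound (x : X16) : ∀ n : ℕ, 1 ≤ n →
    (T16^[n] x : ℝ) ≤ (1 / 2) ^ n * (1 + (x : ℝ)) := by
  intro n hn
  induction n with
  | zero => omega
  | succ k ih =>
    rcases Nat.eq_or_lt_of_le hn with h | h
    · have hk0 : k = 0 := by omega
      subst hk0
      simpa using T16_le x
    · have hk : 1 ≤ k := by omega
      have hb := ih hk
      rw [Function.iterate_succ_apply']
      have hne : (T16^[k] x : ℝ) ≠ 0 := by
        obtain ⟨m, hm⟩ : ∃ m, k = m + 1 := ⟨k - 1, by omega⟩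
        rw [hm, Function.iterate_succ_apply']
        exact T16_ne_zero _
      unfold T16
      split_ifs with h'
      · exact absurd h' hne
      · show (T16^[k] x : ℝ) / 2 ≤ _
        rw [pow_succ]
        linarith

/-- T16 satisfies the Ciric-type1 estimate |Tⁿx - Tⁿy| ≤ (1/2)ⁿ (1 + x + y) (i.e. with
q(x,y) = 1/√2 and δ(x,y) = 1 + x + y over the C*-algebra ℝ), yet it has no fixed point. -/
theorem T16_ciric1_no_fixedPoint :
    (∀ x y : X16, ∀ n : ℕ, 1 ≤ n →
      |(T16^[n] x : ℝ) - (T16^[n] y : ℝ)| ≤ (1 / 2) ^ n * (1 + (x : ℝ) + (y : ℝ))) ∧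
    ¬ ∃ z : X16, T16 z = z := by
  constructor
  · intro x y n hn
    have hx := X16_nonneg x.2
    have hy := X16_nonneg y.2
    have hax := X16_nonneg (T16^[n] x).2
    have hay := X16_nonneg (T16^[n] y).2
    have hbx := orbit_bound x n hn
    have hby := orbit_bound y n hn
    have hp : (0:ℝ) ≤ (1/2)^n := by positivity
    rw [abs_sub_le_iff]
    constructor <;> nlinarith
  · rintro ⟨z, hz⟩
    have hz' : (T16 z : ℝ) = (z : ℝ) := by rw [hz]
    unfold T16 at hz'
    split_ifs at hz' with h
    · simp at hz'; rw [h] at hz'; norm_num at hz'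
    · simp at hz'
      exact h (by linarith)
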